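/- Fix J in N with J >= 1, rates lambda : Fin J -> R with lambda_j > 0, costs b : Fin J -> R with b_j > 0, capacities Q : Fin J -> N with Q_j >= 1, and A in R. Define C_F(T) = (A + sum over j of b_j * S(lambda_j * T, Q_j)) / T for T > 0. If T > 0 satisfies the first-order condition sum over j of b_j * Q_j * Ptail(lambda_j * T, Q_j + 1) = A, then the second derivative of C_F at T equals (sum over j of b_j * lambda_j^2 * p(lambda_j * T, Q_j - 1)) / T, and this value is strictly positive. -/

import Mathlib

open scoped BigOperators

/-- Poisson probability mass function with mean `μ` at `r`. -/
noncomputable def poissonPMF (μ : ℝ) (r : ℕ) : ℝ :=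
  Real.exp (-μ) * μ ^ r / (Nat.factorial r)

/-- Poisson tail probability `P(D ≥ k)` for a natural-number threshold `k`. -/
noncomputable def Ptail (μ : ℝ) (k : ℕ) : ℝ :=
  ∑' r : ℕ, if k ≤ r then poissonPMF μ r else 0

/-- Expected shortage `E[(D - Q)^+]` for a natural-number capacity `Q`. -/
noncomputable def shortage (μ : ℝ) (Q : ℕ) : ℝ :=
  ∑' r : ℕ, if Q ≤ r then ((r : ℝ) - (Q : ℝ)) * poissonPMF μ r else 0

/-! ### Auxiliary summation lemmas -/

lemma summable_pp (μ : ℝ) : Summable (fun r => poissonPMF μ r) := by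
  have := (Real.summable_pow_div_factorial μ).mul_left (Real.exp (-μ))
  refine this.congr fun r => ?_
  simp [poissonPMF, mul_div_assoc]

lemma tsum_pp (μ : ℝ) : ∑' r, poissonPMF μ r = 1 := by
  have h : ∑' r : ℕ, Real.exp (-μ) * (μ ^ r / (Nat.factorial r))
      = Real.exp (-μ) * ∑' r : ℕ, μ ^ r / (Nat.factorial r) :=
    tsum_mul_left
  have h2 : ∑' r : ℕ, μ ^ r / (Nat.factorial r : ℝ) = Real.exp μ := by
    rw [Real.exp_eq_exp_ℝ, NormedSpace.exp_eq_tsum_div]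
  calc ∑' r, poissonPMF μ r = ∑' r : ℕ, Real.exp (-μ) * (μ ^ r / (Nat.factorial r)) := by
        refine tsum_congr fun r => ?_; simp [poissonPMF, mul_div_assoc]
    _ = Real.exp (-μ) * Real.exp μ := by rw [h, h2]
    _ = 1 := by rw [← Real.exp_add]; simp

lemma succ_mul_pp (μ : ℝ) (r : ℕ) :
    ((r + 1 : ℕ) : ℝ) * poissonPMF μ (r + 1) = μ * poissonPMF μ r := by
  have h1 : (Nat.factorial r : ℝ) ≠ 0 := Nat.cast_ne_zero.mpr (Nat.factorial_ne_zero r)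
  have h2 : (Nat.factorial (r+1) : ℝ) ≠ 0 := Nat.cast_ne_zero.mpr (Nat.factorial_ne_zero _)
  simp only [poissonPMF, Nat.factorial_succ, Nat.cast_mul, pow_succ]
  field_simp

lemma summable_rpp (μ : ℝ) : Summable (fun r : ℕ => (r : ℝ) * poissonPMF μ r) := by
  rw [← summable_nat_add_iff 1]
  exact ((summable_pp μ).mul_left μ).congr fun r => (succ_mul_pp μ r).symm

lemma tsum_rpp (μ : ℝ) : ∑' r : ℕ, (r : ℝ) * poissonPMF μ r = μ := by
  rw [Summable.tsum_eq_zero_add (summable_rpp μ)]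
  simp only [Nat.cast_zero, zero_mul, zero_add]
  have : ∑' r : ℕ, ((r + 1 : ℕ) : ℝ) * poissonPMF μ (r + 1)
      = ∑' r : ℕ, μ * poissonPMF μ r := tsum_congr fun r => succ_mul_pp μ r
  rw [this, tsum_mul_left, tsum_pp, mul_one]

lemma tail_split (g : ℕ → ℝ) (hg : Summable g) (Q : ℕ) :
    (∑' r : ℕ, if Q ≤ r then g r else 0)
      = (∑' r, g r) - ∑ r ∈ Finset.range Q, g r := by
  have hfin : Summable (fun r => if Q ≤ r then (0:ℝ) else g r) :=
    summable_of_ne_finset_zero (s := Finset.range Q)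
      (fun r hr => by simp only [Finset.mem_range, not_lt] at hr; simp [hr])
  have hsum : ∑' r : ℕ, (if Q ≤ r then (0:ℝ) else g r)
      = ∑ r ∈ Finset.range Q, (if Q ≤ r then (0:ℝ) else g r) :=
    tsum_eq_sum (fun r hr => by
      simp only [Finset.mem_range, not_lt] at hr; simp [hr])
  have key : (fun r : ℕ => if Q ≤ r then g r else 0)
      = fun r => g r - (if Q ≤ r then (0:ℝ) else g r) := by
    funext r; by_cases h : Q ≤ r <;> simp [h]
  rw [key, Summable.tsum_sub hg hfin, hsum]
  congr 1
  refine Finset.sum_congr rfl fun r hr => ?_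
  simp only [Finset.mem_range] at hr
  simp [not_le.mpr hr]

lemma Ptail_eq (μ : ℝ) (k : ℕ) :
    Ptail μ k = 1 - ∑ r ∈ Finset.range k, poissonPMF μ r := by
  rw [Ptail, tail_split _ (summable_pp μ) k, tsum_pp]

lemma shortage_eq (μ : ℝ) (Q : ℕ) :
    shortage μ Q = μ - Q + ∑ r ∈ Finset.range Q, ((Q : ℝ) - r) * poissonPMF μ r := by
  have hg : Summable (fun r : ℕ => ((r : ℝ) - Q) * poissonPMF μ r) := by
    have := (summable_rpp μ).sub ((summable_pp μ).mul_left (Q : ℝ))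
    exact this.congr fun r => by ring
  have htg : ∑' r : ℕ, ((r : ℝ) - Q) * poissonPMF μ r = μ - Q := by
    have : ∑' r : ℕ, ((r : ℝ) - Q) * poissonPMF μ r
        = ∑' r : ℕ, ((r : ℝ) * poissonPMF μ r - (Q : ℝ) * poissonPMF μ r) :=
      tsum_congr fun r => by ring
    rw [this, Summable.tsum_sub (summable_rpp μ) ((summable_pp μ).mul_left _), tsum_rpp,
      tsum_mul_left, tsum_pp, mul_one]
  rw [shortage, tail_split _ hg Q, htg]
  have : ∑ r ∈ Finset.range Q, ((r:ℝ) - Q) * poissonPMF μ r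
      = - ∑ r ∈ Finset.range Q, ((Q:ℝ) - r) * poissonPMF μ r := by
    rw [← Finset.sum_neg_distrib]
    exact Finset.sum_congr rfl fun r _ => by ring
  rw [this]; ring

/-! ### Derivative lemmas -/

noncomputable def ppD (μ : ℝ) (r : ℕ) : ℝ :=
  (if r = 0 then 0 else poissonPMF μ (r - 1)) - poissonPMF μ r

lemma hasDerivAt_pp (μ : ℝ) (r : ℕ) :
    HasDerivAt (fun x => poissonPMF x r) (ppD μ r) μ := by
  have h1 : HasDerivAt (fun x : ℝ => Real.exp (-x)) (-Real.exp (-μ)) μ := by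
    exact ((Real.hasDerivAt_exp (-μ)).comp μ ((hasDerivAt_id μ).neg)).congr_deriv (by simp)
  have h3 := (h1.mul (hasDerivAt_pow r μ)).div_const (Nat.factorial r : ℝ)
  have heq : (fun x : ℝ => Real.exp (-x) * x ^ r / (Nat.factorial r : ℝ))
      = fun x => poissonPMF x r := rfl
  change HasDerivAt (fun x => poissonPMF x r) _ μ at h3
  convert h3 using 1
  rcases r with _ | n
  · simp [ppD, poissonPMF]
  · have hn : (Nat.factorial (n+1) : ℝ) ≠ 0 := Nat.cast_ne_zero.mpr (Nat.factorial_ne_zero _)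
    have hn' : (Nat.factorial n : ℝ) ≠ 0 := Nat.cast_ne_zero.mpr (Nat.factorial_ne_zero _)
    simp only [ppD, poissonPMF, Nat.succ_ne_zero, if_false, Nat.succ_sub_one]
    rw [Nat.factorial_succ]
    push_cast
    field_simp
    ring

lemma sum_ppD (μ : ℝ) (Q : ℕ) :
    ∑ r ∈ Finset.range (Q + 1), ppD μ r = -poissonPMF μ Q := by
  induction Q with
  | zero => simp [ppD]
  | succ n ih =>
      rw [Finset.sum_range_succ, ih]
      simp [ppD]; ring

lemma sum_W (μ : ℝ) (Q : ℕ) :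
    ∑ r ∈ Finset.range Q, ((Q : ℝ) - r) * ppD μ r
      = -∑ r ∈ Finset.range Q, poissonPMF μ r := by
  induction Q with
  | zero => simp
  | succ n ih =>
      have h1 : ∑ r ∈ Finset.range (n+1), (((n:ℕ)+1 : ℝ) - r) * ppD μ r
          = ∑ r ∈ Finset.range (n+1), (((n : ℝ) - r) * ppD μ r + ppD μ r) :=
        Finset.sum_congr rfl fun r _ => by ring
      push_cast
      rw [h1, Finset.sum_add_distrib, Finset.sum_range_succ (f := fun r => ((n:ℝ) - r) * ppD μ r),
        sub_self, zero_mul, add_zero, ih, sum_ppD,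
        Finset.sum_range_succ (f := fun r => poissonPMF μ r)]
      ring

lemma key_id (μ : ℝ) (Q : ℕ) :
    ∑ r ∈ Finset.range Q, ((Q:ℝ) - r) * poissonPMF μ r
      + μ * ∑ r ∈ Finset.range Q, poissonPMF μ r
      = (Q:ℝ) * ∑ r ∈ Finset.range (Q+1), poissonPMF μ r := by
  have h1 : μ * ∑ r ∈ Finset.range Q, poissonPMF μ r
      = ∑ r ∈ Finset.range (Q+1), (r:ℝ) * poissonPMF μ r := by
    rw [Finset.mul_sum, Finset.sum_range_succ' (f := fun r => (r:ℝ) * poissonPMF μ r)]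
    simp only [Nat.cast_zero, zero_mul, add_zero]
    exact (Finset.sum_congr rfl fun r _ => (succ_mul_pp μ r)).symm
  have h2 : ∑ r ∈ Finset.range Q, ((Q:ℝ) - r) * poissonPMF μ r
      = ∑ r ∈ Finset.range (Q+1), ((Q:ℝ) - r) * poissonPMF μ r := by
    rw [Finset.sum_range_succ]; simp
  rw [h2, h1, ← Finset.sum_add_distrib, Finset.mul_sum]
  exact Finset.sum_congr rfl fun r _ => by ring

/-! ### The cost function and its derivatives -/

noncomputable def Efun (J : ℕ) (lam b : Fin J → ℝ) (Q : Fin J → ℕ) (A : ℝ) (t : ℝ) : ℝ :=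
  A + ∑ j, b j * (lam j * t - (Q j : ℝ)
    + ∑ r ∈ Finset.range (Q j), ((Q j : ℝ) - r) * poissonPMF (lam j * t) r)

noncomputable def dEfun (J : ℕ) (lam b : Fin J → ℝ) (Q : Fin J → ℕ) (t : ℝ) : ℝ :=
  ∑ j, b j * (lam j * (1 - ∑ r ∈ Finset.range (Q j), poissonPMF (lam j * t) r))

lemma hasDerivAt_lin (c t : ℝ) : HasDerivAt (fun x : ℝ => c * x) c t := by
  simpa using (hasDerivAt_id t).const_mul c

lemma hasDerivAt_ppsum (c : ℝ) (w : ℕ → ℝ) (s : Finset ℕ) (t : ℝ) :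
    HasDerivAt (fun x => ∑ r ∈ s, w r * poissonPMF (c * x) r)
      (∑ r ∈ s, w r * (ppD (c * t) r * c)) t := by
  refine HasDerivAt.fun_sum fun r _ => ?_
  exact (((hasDerivAt_pp (c * t) r).comp t (hasDerivAt_lin c t))).const_mul (w r)

lemma hasDerivAt_Efun (J : ℕ) (lam b : Fin J → ℝ) (Q : Fin J → ℕ) (A : ℝ) (t : ℝ) :
    HasDerivAt (Efun J lam b Q A) (dEfun J lam b Q t) t := by
  unfold Efun dEfun
  refine HasDerivAt.const_add A (HasDerivAt.fun_sum fun j _ => ?_)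
  have hlin : HasDerivAt (fun x : ℝ => lam j * x - (Q j : ℝ)) (lam j) t :=
    (hasDerivAt_lin (lam j) t).sub_const _
  have hs := hasDerivAt_ppsum (lam j) (fun r => ((Q j : ℝ) - r)) (Finset.range (Q j)) t
  have h := (hlin.add hs).const_mul (b j)
  refine h.congr_deriv ?_
  have : ∑ r ∈ Finset.range (Q j), ((Q j : ℝ) - r) * (ppD (lam j * t) r * lam j)
      = (∑ r ∈ Finset.range (Q j), ((Q j : ℝ) - r) * ppD (lam j * t) r) * lam j := by
    rw [Finset.sum_mul]; exact Finset.sum_congr rfl fun r _ => by ring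
  rw [this, sum_W]
  ring

lemma hasDerivAt_dEfun (J : ℕ) (lam b : Fin J → ℝ) (Q : Fin J → ℕ) (hQ : ∀ j, 1 ≤ Q j) (t : ℝ) :
    HasDerivAt (dEfun J lam b Q)
      (∑ j, b j * (lam j) ^ 2 * poissonPMF (lam j * t) (Q j - 1)) t := by
  unfold dEfun
  refine HasDerivAt.fun_sum fun j _ => ?_
  have hs := hasDerivAt_ppsum (lam j) (fun _ => (1:ℝ)) (Finset.range (Q j)) t
  simp only [one_mul] at hs
  have h := ((hs.const_sub 1).const_mul (lam j)).const_mul (b j)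
  refine h.congr_deriv ?_
  have hQj : Q j - 1 + 1 = Q j := Nat.succ_pred_eq_of_pos (hQ j)
  have : ∑ r ∈ Finset.range (Q j), ppD (lam j * t) r * lam j
      = (∑ r ∈ Finset.range ((Q j - 1) + 1), ppD (lam j * t) r) * lam j := by
    rw [hQj, Finset.sum_mul]
  rw [this, sum_ppD]
  ring

/-- at a point satisfying the first-order condition, the second
derivative of the fixed-cycle cost equals `(∑ⱼ bⱼ λⱼ² p(λⱼT, Qⱼ-1)) / T` and is
strictly positive. -/
theorem second_deriv_at_critical_point (J : ℕ) (hJ : 1 ≤ J)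
    (lam : Fin J → ℝ) (hlam : ∀ j, 0 < lam j)
    (b : Fin J → ℝ) (hb : ∀ j, 0 < b j)
    (Q : Fin J → ℕ) (hQ : ∀ j, 1 ≤ Q j) (A : ℝ)
    (T : ℝ) (hT : 0 < T)
    (hFOC : (∑ j, b j * (Q j : ℝ) * Ptail (lam j * T) (Q j + 1)) = A) :
    HasDerivAt
      (deriv (fun t => (A + ∑ j, b j * shortage (lam j * t) (Q j)) / t))
      ((∑ j, b j * (lam j) ^ 2 * poissonPMF (lam j * T) (Q j - 1)) / T) T ∧
    0 < (∑ j, b j * (lam j) ^ 2 * poissonPMF (lam j * T) (Q j - 1)) / T := by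
  set S : ℝ := ∑ j, b j * (lam j) ^ 2 * poissonPMF (lam j * T) (Q j - 1) with hS
  have hFE : (fun t => (A + ∑ j, b j * shortage (lam j * t) (Q j)) / t)
      = fun t => Efun J lam b Q A t / t := by
    funext t
    congr 1
    unfold Efun
    congr 1
    exact Finset.sum_congr rfl fun j _ => by rw [shortage_eq]
  -- the first derivative agrees with an explicit function near T
  have heq : deriv (fun t => (A + ∑ j, b j * shortage (lam j * t) (Q j)) / t)
      =ᶠ[nhds T] fun t => (dEfun J lam b Q t * t - Efun J lam b Q A t * 1) / t ^ 2 := by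
    filter_upwards [eventually_ne_nhds hT.ne'] with t ht
    rw [hFE]
    have h := ((hasDerivAt_Efun J lam b Q A t).div (hasDerivAt_id t) ht).deriv
    simpa [Pi.div_def] using h
  -- the critical-point identity
  have hcrit : dEfun J lam b Q T * T - Efun J lam b Q A T = 0 := by
    have hterm : ∀ j : Fin J,
        b j * (lam j * (1 - ∑ r ∈ Finset.range (Q j), poissonPMF (lam j * T) r)) * T
          - b j * (lam j * T - (Q j : ℝ)
              + ∑ r ∈ Finset.range (Q j), ((Q j : ℝ) - r) * poissonPMF (lam j * T) r)
          = b j * (Q j : ℝ) * Ptail (lam j * T) (Q j + 1) := by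
      intro j
      rw [Ptail_eq]
      have hk := key_id (lam j * T) (Q j)
      linear_combination (-(b j)) * hk
    have hsum : ∑ j, (b j * (lam j * (1 - ∑ r ∈ Finset.range (Q j), poissonPMF (lam j * T) r)) * T
          - b j * (lam j * T - (Q j : ℝ)
              + ∑ r ∈ Finset.range (Q j), ((Q j : ℝ) - r) * poissonPMF (lam j * T) r))
        = A := by
      rw [Finset.sum_congr rfl fun j _ => hterm j, hFOC]
    rw [Finset.sum_sub_distrib] at hsum
    simp only [dEfun, Efun, Finset.sum_mul]
    linarith [hsum]
  -- second derivative
  have hN : HasDerivAt (fun t => dEfun J lam b Q t * t - Efun J lam b Q A t * 1)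
      ((S * T + dEfun J lam b Q T * 1) - dEfun J lam b Q T * 1) T :=
    ((hasDerivAt_dEfun J lam b Q hQ T).mul (hasDerivAt_id T)).sub
      ((hasDerivAt_Efun J lam b Q A T).mul_const 1)
  have hD0 := hN.div (hasDerivAt_pow 2 T) (pow_ne_zero 2 hT.ne')
  have hfinal : (((S * T + dEfun J lam b Q T * 1) - dEfun J lam b Q T * 1) * T ^ 2
      - (dEfun J lam b Q T * T - Efun J lam b Q A T * 1) * ((2 : ℕ) * T ^ (2 - 1))) / (T ^ 2) ^ 2
      = S / T := by
    have h0 : dEfun J lam b Q T * T - Efun J lam b Q A T * 1 = 0 := by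
      rw [mul_one]; exact hcrit
    rw [h0]
    field_simp
    ring
  have hD : HasDerivAt (fun t => (dEfun J lam b Q t * t - Efun J lam b Q A t * 1) / t ^ 2)
      (S / T) T := hfinal ▸ hD0
  constructor
  · exact hD.congr_of_eventuallyEq heq
  · have hpos : 0 < S := by
      have hne : (Finset.univ : Finset (Fin J)).Nonempty :=
        ⟨⟨0, hJ⟩, Finset.mem_univ _⟩
      refine Finset.sum_pos (fun j _ => ?_) hne
      have hμ : 0 < lam j * T := mul_pos (hlam j) hT
      have hpp : 0 < poissonPMF (lam j * T) (Q j - 1) :=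
        div_pos (mul_pos (Real.exp_pos _) (pow_pos hμ _))
          (Nat.cast_pos.mpr (Nat.factorial_pos _))
      exact mul_pos (mul_pos (hb j) (pow_pos (hlam j) 2)) hpp
    exact div_pos hpos hT
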